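/- arXiv:2502.05269 — 2 statements merged into one kernel-verified Lean document; each statement's English description precedes it below -/
import Mathlib

section
/- Let n ≥ 1 and k ≥ 1, let b_1 > b_2 > ⋯ > b_k be integers with 1 ≤ b_i ≤ n, and for each i let a_i be an integer with 1 ≤ a_i ≤ b_i. Then the concatenated list B_k ++ B_{k−1} ++ ⋯ ++ B_1, where B_i = (s_{b_i}, s_{b_i−1}, …, s_{a_i}), is reduced; that is, the permutation (s_{b_k}⋯s_{a_k})·(s_{b_{k−1}}⋯s_{a_{k−1}})⋯(s_{b_1}⋯s_{a_1}) cannot be written as a product of fewer than Σ_{i=1}^{k}(b_i − a_i + 1) adjacent transpositions. -/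
/-!
A word in adjacent transpositions has at least as many letters as its product has inversions,
since multiplying by one `s_r` changes the inversion count by at most one. (Points of
`Fin (n + 1)` are counted from `0`, so `s_r` swaps `r - 1` and `r`.) The product of the block
`(s_b, …, s_a)` is the cycle sending `a - 1` to `b` and shifting `a, …, b` down by one; its
inversions are exactly the `b - a + 1` pairs `(a - 1, j)` with `a ≤ j ≤ b`. The blocks after
`B_1` only use letters below `b_1`, so their product `τ` fixes every point `≥ b_1` and keeps
each inversion of the first block an inversion of the whole product. Inversion counts therefore
add up along the blocks, which gives the bound by induction on `k`.
-/

noncomputable section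

open Fin.NatCast in
/-- The adjacent transposition `s_r = (r, r+1)` (1-based indexing) in `Perm (Fin (n+1))`,
acting on `{1,…,n+1}` identified with `Fin (n+1)`. -/
def s (n : ℕ) (r : ℕ) : Equiv.Perm (Fin (n + 1)) := Equiv.swap (↑(r - 1)) (↑r)

/-- The block `(s_b, s_{b-1}, …, s_a)`, recorded as the list of indices `[b, b-1, …, a]`. -/
def block (a b : ℕ) : List ℕ := (List.range' a (b + 1 - a)).reverse

open Finset

namespace Equiv.Perm

variable {α : Type*} [LinearOrder α]

lemma eq_and_eq_of_swap_apply_lt_swap_apply {u v x y : α} (huv : u ⋖ v) (hxy : x < y)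
    (h : swap u v y < swap u v x) : x = u ∧ y = v := by
  obtain ⟨huv_lt, huv_gap⟩ := huv
  rw [swap_apply_def, swap_apply_def] at h
  split_ifs at h <;> grind

lemma apply_lt_of_forall_le_apply_eq {τ : Perm α} {c y : α} (h : ∀ z, c ≤ z → τ z = z)
    (hy : y < c) : τ y < c := by
  by_contra! hc
  exact hy.not_ge (τ.injective (h _ hc) ▸ hc)

variable [Fintype α]

def inversions (σ : Perm α) : Finset (α × α) :=
  {p | p.1 < p.2 ∧ σ p.2 < σ p.1}

@[simp]
lemma mem_inversions {σ : Perm α} {p : α × α} :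
    p ∈ σ.inversions ↔ p.1 < p.2 ∧ σ p.2 < σ p.1 := by
  simp [inversions]

@[simp]
lemma inversions_one : (1 : Perm α).inversions = ∅ := by
  ext p
  simpa using le_of_lt

lemma card_inversions_swap_mul_le {u v : α} (huv : u ⋖ v) (σ : Perm α) :
    #(swap u v * σ).inversions ≤ #σ.inversions + 1 := by
  have hsub : (swap u v * σ).inversions ⊆ insert (σ⁻¹ u, σ⁻¹ v) σ.inversions := by
    rintro ⟨x, y⟩ hp
    rw [mem_inversions] at hp
    rcases lt_or_gt_of_ne (σ.injective.ne hp.1.ne) with hlt | hgt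
    · obtain ⟨hx, hy⟩ := eq_and_eq_of_swap_apply_lt_swap_apply huv hlt hp.2
      simp [← hx, ← hy]
    · exact mem_insert_of_mem (mem_inversions.2 ⟨hp.1, hgt⟩)
  exact (card_le_card hsub).trans (card_insert_le _ _)

lemma card_inversions_add_card_inversions_le {σ τ : Perm α}
    (h : ∀ x y, x < y → σ y < σ x → τ (σ y) < τ (σ x)) :
    #τ.inversions + #σ.inversions ≤ #(τ * σ).inversions := by
  let pullback : α × α ↪ α × α := (σ⁻¹.prodCongr σ⁻¹).toEmbedding
  have hpull : τ.inversions.map pullback ⊆ (τ * σ).inversions := by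
    simp only [subset_iff, mem_map, mem_inversions]
    rintro _ ⟨⟨x, y⟩, ⟨hxy, hτ⟩, rfl⟩
    refine ⟨?_, by simpa [pullback] using hτ⟩
    by_contra! hle
    have hlt := hle.lt_of_ne (σ⁻¹.injective.ne hxy.ne')
    have := h _ _ hlt (by simpa [pullback] using hxy)
    simp only [pullback, toEmbedding_apply, prodCongr_apply, Prod.map, coe_inv,
      apply_symm_apply] at this
    exact hτ.not_gt this
  have hσ : σ.inversions ⊆ (τ * σ).inversions := fun p hp => by
    rw [mem_inversions] at hp ⊢
    exact ⟨hp.1, h _ _ hp.1 hp.2⟩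
  have hdisj : _root_.Disjoint (τ.inversions.map pullback) σ.inversions := by
    simp only [disjoint_left, mem_map, mem_inversions]
    rintro _ ⟨⟨x, y⟩, ⟨hxy, -⟩, rfl⟩ ⟨-, hσ⟩
    simp only [pullback, toEmbedding_apply, prodCongr_apply, Prod.map, coe_inv,
      apply_symm_apply] at hσ
    exact hσ.not_gt hxy
  calc #τ.inversions + #σ.inversions = #(τ.inversions.map pullback ∪ σ.inversions) := by
        rw [card_union_of_disjoint hdisj, card_map]
    _ ≤ #(τ * σ).inversions := card_le_card (union_subset hpull hσ)

end Equiv.Perm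

section AdjacentTranspositions

open Fin.NatCast

variable {n : ℕ}

lemma natCast_sub_one_covBy_natCast {r : ℕ} (h1 : 1 ≤ r) (h2 : r ≤ n) :
    ((r - 1 : ℕ) : Fin (n + 1)) ⋖ (r : Fin (n + 1)) := by
  rw [Fin.covBy_iff, Fin.val_cast_of_lt (by omega), Fin.val_cast_of_lt (by omega),
    Nat.covBy_iff_add_one_eq]
  omega

lemma card_inversions_prod_le_length {M : List ℕ} (hM : ∀ r ∈ M, 1 ≤ r ∧ r ≤ n) :
    #(M.map (s n)).prod.inversions ≤ M.length := by
  induction M with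
  | nil => simp
  | cons r M ih =>
    obtain ⟨h1, h2⟩ := hM r List.mem_cons_self
    have := ih fun t ht => hM t (List.mem_cons_of_mem _ ht)
    rw [List.map_cons, List.prod_cons, List.length_cons]
    exact (Equiv.Perm.card_inversions_swap_mul_le (natCast_sub_one_covBy_natCast h1 h2) _).trans
      (by omega)

lemma s_apply_val {r : ℕ} (h1 : 1 ≤ r) (h2 : r ≤ n) (x : Fin (n + 1)) :
    (s n r x : ℕ) = if (x : ℕ) = r - 1 then r else if (x : ℕ) = r then r - 1 else x := by
  have e1 : (((r - 1 : ℕ) : Fin (n + 1)) : ℕ) = r - 1 := Fin.val_cast_of_lt (by omega)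
  have e2 : ((r : Fin (n + 1)) : ℕ) = r := Fin.val_cast_of_lt (by omega)
  rw [s, Equiv.swap_apply_def]
  split_ifs <;> simp only [Fin.ext_iff, e1, e2] at * <;> omega

lemma s_apply_of_lt {r : ℕ} {x : Fin (n + 1)} (h : r < x) : s n r x = x := by
  have hval (m : ℕ) : ((m : Fin (n + 1)) : ℕ) ≤ m := by
    rw [Fin.val_natCast]; exact Nat.mod_le _ _
  refine Equiv.swap_apply_of_ne_of_ne ?_ ?_ <;> rintro rfl
  · have := hval (r - 1); omega
  · have := hval r; omega

lemma prod_apply_of_forall_lt {w : List ℕ} {x : Fin (n + 1)} (h : ∀ r ∈ w, r < x) :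
    (w.map (s n)).prod x = x := by
  induction w with
  | nil => rfl
  | cons r w ih =>
    rw [List.map_cons, List.prod_cons, Equiv.Perm.mul_apply,
      ih fun t ht => h t (List.mem_cons_of_mem _ ht), s_apply_of_lt (h r List.mem_cons_self)]

lemma block_succ {a b : ℕ} (h : a ≤ b + 1) : block a (b + 1) = (b + 1) :: block a b := by
  rw [block, block, show b + 1 + 1 - a = (b + 1 - a) + 1 by omega, List.range'_concat,
    List.reverse_append, one_mul, Nat.add_sub_cancel' h]
  rfl

lemma prod_block_apply_val {a b : ℕ} (ha : 1 ≤ a) (hab : a ≤ b) (hb : b ≤ n)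
    (x : Fin (n + 1)) :
    (((block a b).map (s n)).prod x : ℕ) =
      if (x : ℕ) = a - 1 then b else if a ≤ x ∧ (x : ℕ) ≤ b then x - 1 else x := by
  induction b, hab using Nat.le_induction generalizing x with
  | base =>
    rw [block, Nat.add_sub_cancel_left, List.range'_one, List.reverse_singleton,
      List.map_singleton, List.prod_singleton, s_apply_val ha hb]
    split_ifs <;> omega
  | succ b hab ih =>
    rw [block_succ (by omega), List.map_cons, List.prod_cons, Equiv.Perm.mul_apply,
      s_apply_val (by omega) hb, Nat.add_sub_cancel, ih (by omega) x]
    split_ifs <;> omega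

lemma mem_inversions_prod_block {a b : ℕ} (ha : 1 ≤ a) (hab : a ≤ b) (hb : b ≤ n)
    {x y : Fin (n + 1)} :
    (x, y) ∈ ((block a b).map (s n)).prod.inversions ↔
      (x : ℕ) = a - 1 ∧ a ≤ y ∧ (y : ℕ) ≤ b := by
  simp only [Equiv.Perm.mem_inversions, Fin.lt_def]
  rw [prod_block_apply_val ha hab hb, prod_block_apply_val ha hab hb]
  split_ifs <;> omega

lemma le_card_inversions_prod_block {a b : ℕ} (ha : 1 ≤ a) (hab : a ≤ b) (hb : b ≤ n) :
    b - a + 1 ≤ #((block a b).map (s n)).prod.inversions := by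
  have hval {m : ℕ} (hm : m ≤ n) : ((m : Fin (n + 1)) : ℕ) = m :=
    Fin.val_cast_of_lt (by omega)
  let pair : ℕ → Fin (n + 1) × Fin (n + 1) := fun j => ((a - 1 : ℕ), (j : ℕ))
  have hsub : (Icc a b).image pair ⊆ ((block a b).map (s n)).prod.inversions := by
    simp only [subset_iff, mem_image, mem_Icc]
    rintro _ ⟨j, hj, rfl⟩
    rw [mem_inversions_prod_block ha hab hb, hval (by omega), hval (by omega)]
    omega
  have hinj : Set.InjOn pair (Icc a b) := by
    intro i hi j hj hij
    simp only [coe_Icc, Set.mem_Icc] at hi hj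
    have := congrArg Fin.val (Prod.mk.inj hij).2
    rwa [hval (by omega), hval (by omega)] at this
  calc b - a + 1 = #((Icc a b).image pair) := by
        rw [card_image_of_injOn hinj, Nat.card_Icc]
        omega
    _ ≤ _ := card_le_card hsub

lemma sum_le_card_inversions_prod_blocks {k : ℕ} (b a : Fin k → ℕ) (hbn : ∀ i, b i ≤ n)
    (hb : StrictAnti b) (ha : ∀ i, 1 ≤ a i ∧ a i ≤ b i) :
    ∑ i, (b i - a i + 1) ≤
      #((((List.ofFn fun i => block (a i) (b i)).reverse).flatten).map (s n)).prod.inversions := by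
  induction k with
  | zero => simp
  | succ k ih =>
    rw [List.ofFn_succ, List.reverse_cons, List.flatten_append, List.flatten_singleton,
      List.map_append, List.prod_append, Fin.sum_univ_succ]
    have hτ_card := ih (fun i => b i.succ) (fun i => a i.succ) (fun i => hbn _)
      (hb.comp_strictMono Fin.strictMono_succ) (fun i => ha _)
    have hρ_card := le_card_inversions_prod_block (ha 0).1 (ha 0).2 (hbn 0)
    set w := ((List.ofFn fun i : Fin k => block (a i.succ) (b i.succ)).reverse).flatten
    set τ := (w.map (s n)).prod
    set ρ := ((block (a 0) (b 0)).map (s n)).prod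
    have hw : ∀ r ∈ w, r < b 0 := by
      simp only [w, List.mem_flatten, List.mem_reverse, List.mem_ofFn]
      rintro r ⟨_, ⟨i, rfl⟩, hr⟩
      have := hb (Fin.succ_pos i)
      simp only [block, List.mem_reverse, List.mem_range'_1] at hr
      omega
    have hρ : ∀ x y, x < y → ρ y < ρ x → τ (ρ y) < τ (ρ x) := by
      intro x y hxy hinv
      obtain ⟨hx, -⟩ := (mem_inversions_prod_block (ha 0).1 (ha 0).2 (hbn 0)).1
        (Equiv.Perm.mem_inversions.2 ⟨hxy, hinv⟩)
      have hρx : (ρ x : ℕ) = b 0 := by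
        rw [prod_block_apply_val (ha 0).1 (ha 0).2 (hbn 0), if_pos hx]
      have hτ : ∀ z, ρ x ≤ z → τ z = z := fun z hz =>
        prod_apply_of_forall_lt fun r hr => (hw r hr).trans_le (hρx ▸ Fin.le_def.1 hz)
      rw [hτ _ le_rfl]
      exact Equiv.Perm.apply_lt_of_forall_le_apply_eq hτ hinv
    calc _ ≤ #τ.inversions + #ρ.inversions := by omega
      _ ≤ _ := Equiv.Perm.card_inversions_add_card_inversions_le hρ

end AdjacentTranspositions

theorem stmt0_general (n k : ℕ)
    (b a : Fin k → ℕ)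
    (hb : ∀ i, 1 ≤ b i ∧ b i ≤ n)
    (hdec : ∀ i j : Fin k, i < j → b j < b i)
    (ha : ∀ i, 1 ≤ a i ∧ a i ≤ b i)
    (L : List ℕ)
    (hL : L = ((List.ofFn fun i : Fin k => block (a i) (b i)).reverse).flatten) :
    ∀ M : List ℕ, (∀ r ∈ M, 1 ≤ r ∧ r ≤ n) →
      (M.map (s n)).prod = (L.map (s n)).prod →
      (∑ i : Fin k, (b i - a i + 1)) ≤ M.length := by
  intro M hM hprod
  subst hL
  calc ∑ i, (b i - a i + 1)
      ≤ #(((List.ofFn fun i => block (a i) (b i)).reverse.flatten).map (s n)).prod.inversions :=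
        sum_le_card_inversions_prod_blocks b a (fun i => (hb i).2) hdec ha
    _ = #(M.map (s n)).prod.inversions := by rw [hprod]
    _ ≤ M.length := card_inversions_prod_le_length hM

/-- Let `b_1 > b_2 > ⋯ > b_k` with `1 ≤ b_i ≤ n` and `1 ≤ a_i ≤ b_i`.  Then the
concatenated list `B_k ++ ⋯ ++ B_1`, with `B_i = (s_{b_i}, …, s_{a_i})`, is reduced: its
permutation product cannot be written as a product of fewer than `Σ (b_i - a_i + 1)`
adjacent transpositions. -/
theorem stmt0 (n k : ℕ) (hn : 1 ≤ n) (hk : 1 ≤ k)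
    (b a : Fin k → ℕ)
    (hb : ∀ i, 1 ≤ b i ∧ b i ≤ n)
    (hdec : ∀ i j : Fin k, i < j → b j < b i)
    (ha : ∀ i, 1 ≤ a i ∧ a i ≤ b i)
    (L : List ℕ)
    (hL : L = ((List.ofFn fun i : Fin k => block (a i) (b i)).reverse).flatten) :
    ∀ M : List ℕ, (∀ r ∈ M, 1 ≤ r ∧ r ≤ n) →
      (M.map (s n)).prod = (L.map (s n)).prod →
      (∑ i : Fin k, (b i - a i + 1)) ≤ M.length :=
  stmt0_general n k b a hb hdec ha L hL
end
end

section
/- For every q ∈ (0,1), the operator norms satisfy ‖S∘T_q − S‖ = 1 − √(1 − q²) and ‖T_q∘S* − S*‖ = 1 − √(1 − q²); in particular S∘T_q converges to S and T_q∘S* converges to S* in operator norm as q → 0⁺. -/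
/-!
`S ∘ T_q - S = S ∘ (T_q - 1)`, and `T_q - 1` is diagonal with entries `√(1 - q^{2m}) - 1`,
so `(S ∘ T_q - S) x` is the sequence `m ↦ (√(1 - q^{2(m+1)}) - 1) x_{m+1}`. Its norm is
therefore at most `sup_m |√(1 - q^{2(m+1)}) - 1| = 1 - √(1 - q²)`, and this value is attained
on `e₁`. As `T_q` is self-adjoint, `T_q ∘ S* - S*` is the adjoint of `S ∘ T_q - S` and has the
same norm. Both norms tend to `0` as `q → 0⁺`.
-/

noncomputable section

/-- `H = ℓ²(ℕ)` over `ℂ`. -/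
abbrev H : Type := lp (fun _ : ℕ => ℂ) 2

/-- The standard orthonormal basis vector `e_m` of `H`. -/
def e (m : ℕ) : H := lp.single 2 m 1

open ContinuousLinearMap Filter Topology

lemma lp.norm_le_of_norm_apply_le_norm_apply_succ {E : Type*} [NormedAddCommGroup E]
    {p : ENNReal} (hp : 0 < p.toReal) {x y : lp (fun _ : ℕ => E) p}
    (h : ∀ m, ‖y m‖ ≤ ‖x (m + 1)‖) : ‖y‖ ≤ ‖x‖ :=
  lp.norm_le_of_forall_sum_le hp (lp.norm_nonneg' _) fun s => calc
    ∑ m ∈ s, ‖y m‖ ^ p.toReal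
    _ ≤ ∑ m ∈ s, ‖x (m + 1)‖ ^ p.toReal := by gcongr with m; exact h m
    _ = ∑ m ∈ s.map (addRightEmbedding 1), ‖x m‖ ^ p.toReal := by simp
    _ ≤ ‖x‖ ^ p.toReal := lp.sum_rpow_le_norm_rpow hp x _

lemma e_apply (n m : ℕ) : e n m = if m = n then 1 else 0 := by
  simp [e, lp.single_apply, Pi.single_apply]

lemma apply_apply_eq_mul_of_apply_e {A : H →L[ℂ] H} {d : ℕ → ℂ}
    (hA : ∀ n, A (e n) = d n • e n) (x : H) (m : ℕ) : A x m = d m * x m := by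
  have : (lp.evalCLM ℂ _ 2 m).comp A = d m • lp.evalCLM ℂ _ 2 m := by
    refine lp.ext_continuousLinearMap (by norm_num) fun n => ContinuousLinearMap.ext_ring ?_
    have := hA n
    simp only [e] at this
    by_cases hnm : n = m
    · subst hnm; simp [lp.evalCLM, this]
    · simp [lp.evalCLM, this, lp.single_apply, Ne.symm hnm]
  exact congr($this x)

lemma norm_e (n : ℕ) : ‖e n‖ = 1 := by
  simp [e]

lemma norm_shift_comp_diagonal_eq {S A : H →L[ℂ] H} (hS : ∀ x m, S x m = x (m + 1))
    {d : ℕ → ℂ} (hA : ∀ n, A (e n) = d n • e n) {C : ℝ} (hC : 0 ≤ C)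
    (hbound : ∀ m, ‖d (m + 1)‖ ≤ C) (hattained : ‖d 1‖ = C) : ‖S ∘L A‖ = C := by
  refine le_antisymm (opNorm_le_bound _ hC fun x => ?_) ?_
  · calc ‖(S ∘L A) x‖ ≤ ‖(C : ℂ) • x‖ :=
          lp.norm_le_of_norm_apply_le_norm_apply_succ (by norm_num) fun m => by
            rw [comp_apply, hS, apply_apply_eq_mul_of_apply_e hA, norm_mul, lp.coeFn_smul,
              Pi.smul_apply, norm_smul, Complex.norm_real, Real.norm_of_nonneg hC]
            gcongr
            exact hbound m
      _ = C * ‖x‖ := by rw [norm_smul, Complex.norm_real, Real.norm_of_nonneg hC]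
  · calc C = ‖(S ∘L A) (e 1) 0‖ := by
          rw [comp_apply, hS, apply_apply_eq_mul_of_apply_e hA, e_apply, if_pos rfl, mul_one,
            hattained]
      _ ≤ ‖(S ∘L A) (e 1)‖ := lp.norm_apply_le_norm (by norm_num) _ 0
      _ ≤ ‖S ∘L A‖ := (S ∘L A).unit_le_opNorm _ (norm_e 1).le

lemma isSelfAdjoint_of_apply_e {A : H →L[ℂ] H} {d : ℕ → ℝ}
    (hA : ∀ n, A (e n) = (d n : ℂ) • e n) : IsSelfAdjoint A := by
  rw [isSelfAdjoint_iff_isSymmetric]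
  intro x y
  simp only [coe_coe, lp.inner_eq_tsum, RCLike.inner_apply, apply_apply_eq_mul_of_apply_e hA,
    map_mul, Complex.conj_ofReal]
  exact tsum_congr fun m => by ring

lemma norm_ofReal_sqrt_one_sub_sub_one {t : ℝ} (ht : 0 ≤ t) :
    ‖((√(1 - t) : ℝ) : ℂ) - 1‖ = 1 - √(1 - t) := by
  have : √(1 - t) ≤ 1 := Real.sqrt_le_one.mpr (by linarith)
  rw [← Complex.ofReal_one, ← Complex.ofReal_sub, Complex.norm_real,
    Real.norm_of_nonpos (by linarith), neg_sub]

lemma one_sub_sqrt_one_sub_pow_le {q : ℝ} (hq0 : 0 ≤ q) (hq1 : q ≤ 1) (m : ℕ) :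
    1 - √(1 - q ^ (2 * (m + 1))) ≤ 1 - √(1 - q ^ 2) := by
  have : q ^ (2 * (m + 1)) ≤ q ^ 2 := pow_le_pow_of_le_one hq0 hq1 (by omega)
  have := Real.sqrt_le_sqrt (show 1 - q ^ 2 ≤ 1 - q ^ (2 * (m + 1)) by linarith)
  linarith

lemma norm_shift_comp_sub_shift_eq {S T : H →L[ℂ] H} (hS : ∀ x m, S x m = x (m + 1)) {q : ℝ}
    (hq0 : 0 ≤ q) (hq1 : q ≤ 1)
    (hT : ∀ m : ℕ, T (e m) = ((√(1 - q ^ (2 * m)) : ℝ) : ℂ) • e m) :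
    ‖S ∘L T - S‖ = 1 - √(1 - q ^ 2) := by
  have hnorm (m : ℕ) := norm_ofReal_sqrt_one_sub_sub_one (pow_nonneg hq0 (2 * m))
  rw [show S ∘L T - S = S ∘L (T - 1) by rw [comp_sub]; rfl]
  refine norm_shift_comp_diagonal_eq hS (d := fun m => ((√(1 - q ^ (2 * m)) : ℝ) : ℂ) - 1)
    (fun n => by rw [sub_apply, hT, one_apply_eq_self, sub_smul, one_smul])
    (by rw [← hnorm 1]; exact norm_nonneg _) (fun m => ?_) (by rw [hnorm, mul_one])
  rw [hnorm]
  exact one_sub_sqrt_one_sub_pow_le hq0 hq1 m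

/-- Let `S` be the backward shift `(S x)(m) = x(m+1)` (so `S*` is the forward shift) and,
for `q ∈ (0,1)`, let `T_q` be the bounded diagonal operator with
`T_q e_m = √(1 − q^{2m}) · e_m`.  Then `‖S∘T_q − S‖ = 1 − √(1 − q²)` and
`‖T_q∘S* − S*‖ = 1 − √(1 − q²)` for all `q ∈ (0,1)`; in particular `S∘T_q → S` and
`T_q∘S* → S*` in operator norm as `q → 0⁺`. -/
theorem stmt4 (S : H →L[ℂ] H) (T : ℝ → H →L[ℂ] H)
    (hS : ∀ (x : H) (m : ℕ), S x m = x (m + 1))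
    (hT : ∀ q ∈ Set.Ioo (0 : ℝ) 1, ∀ m : ℕ,
      T q (e m) = ((Real.sqrt (1 - q ^ (2 * m)) : ℝ) : ℂ) • e m) :
    (∀ q ∈ Set.Ioo (0 : ℝ) 1,
        ‖S ∘L T q - S‖ = 1 - Real.sqrt (1 - q ^ 2) ∧
        ‖T q ∘L ContinuousLinearMap.adjoint S - ContinuousLinearMap.adjoint S‖
          = 1 - Real.sqrt (1 - q ^ 2)) ∧
      Filter.Tendsto (fun q => S ∘L T q) (nhdsWithin 0 (Set.Ioi (0 : ℝ))) (nhds S) ∧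
      Filter.Tendsto (fun q => T q ∘L ContinuousLinearMap.adjoint S)
        (nhdsWithin 0 (Set.Ioi (0 : ℝ))) (nhds (ContinuousLinearMap.adjoint S)) := by
  have hnorm q (hq : q ∈ Set.Ioo (0 : ℝ) 1) :=
    norm_shift_comp_sub_shift_eq hS hq.1.le hq.2.le (hT q hq)
  have hnorm_adjoint q (hq : q ∈ Set.Ioo (0 : ℝ) 1) :
      ‖T q ∘L adjoint S - adjoint S‖ = 1 - √(1 - q ^ 2) := by
    rw [← (isSelfAdjoint_of_apply_e (hT q hq)).adjoint_eq, ← adjoint_comp, ← map_sub,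
      LinearIsometryEquiv.norm_map, hnorm q hq]
  have hsmall : ∀ᶠ q in 𝓝[>] (0 : ℝ), q ∈ Set.Ioo (0 : ℝ) 1 :=
    Ioo_mem_nhdsGT_of_mem ⟨le_refl 0, one_pos⟩
  have hlim : Tendsto (fun q : ℝ => 1 - √(1 - q ^ 2)) (𝓝[>] 0) (𝓝 0) := by
    have : Continuous fun q : ℝ => 1 - √(1 - q ^ 2) := by fun_prop
    simpa using (this.tendsto 0).mono_left nhdsWithin_le_nhds
  refine ⟨fun q hq => ⟨hnorm q hq, hnorm_adjoint q hq⟩, ?_, ?_⟩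
  · rw [tendsto_iff_norm_sub_tendsto_zero]
    exact hlim.congr' (hsmall.mono fun q hq => (hnorm q hq).symm)
  · rw [tendsto_iff_norm_sub_tendsto_zero]
    exact hlim.congr' (hsmall.mono fun q hq => (hnorm_adjoint q hq).symm)
end
end
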